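/- arXiv:2509.07301 — 3 statements merged into one kernel-verified Lean document; each statement's English description precedes it below -/
import Mathlib

section
/- Let Qᶜ, Vᵁ ∈ ℝ^{L×d}, and let M̃ᶜ ∈ ℝ^{L×L} be the lower-triangular mask with M̃ᶜ_{ij}=1 if i≥j and 0 otherwise. Let S ∈ ℝ^{L×L} be any matrix with S_{ij}=0 for i≥j. Define Sᵁ = ((QᶜVᵁᵀ/√d) ⊙ M̃ᶜ) Sᵀ. Then for every t (1≤t≤L), the t-th row of Sᵁ restricted to its first t columns equals (qᶜ_t Vᵁₜᵀ/√d)(S_{1:t,1:t})ᵀ, and the entries of the t-th row of Sᵁ in columns t+1,…,L are zero (in particular Sᵁ is lower triangular). -/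
open Matrix

/-- let `Qᶜ, Vᵁ ∈ ℝ^{L×d}`, `M̃ᶜ` the lower-triangular 0/1 mask
(`1` iff `i ≥ j`), and `S ∈ ℝ^{L×L}` any matrix with `S i j = 0` for `i ≥ j`.
Define `Sᵁ = ((Qᶜ Vᵁᵀ/√d) ⊙ M̃ᶜ) Sᵀ`. Then for every `1 ≤ t ≤ L`, the `t`-th row of
`Sᵁ` restricted to its first `t` columns equals `(qᶜ_t Vᵁₜᵀ/√d)(S_{1:t,1:t})ᵀ`, and the
entries of that row in columns `t+1, …, L` vanish (so `Sᵁ` is lower triangular). -/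
theorem stmt6 (L d t : ℕ) (ht : t ≤ L) (ht1 : 1 ≤ t)
    (Qc Vu : Matrix (Fin L) (Fin d) ℝ)
    (S : Matrix (Fin L) (Fin L) ℝ) (hS : ∀ i j : Fin L, j ≤ i → S i j = 0)
    (Su : Matrix (Fin L) (Fin L) ℝ)
    (hSu : Su = (Matrix.of fun i j : Fin L =>
        (Qc * Vuᵀ) i j / Real.sqrt d * (if j ≤ i then (1 : ℝ) else 0)) * Sᵀ)
    (Vt : Matrix (Fin t) (Fin d) ℝ) (hVt : ∀ i c, Vt i c = Vu (Fin.castLE ht i) c)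
    (St : Matrix (Fin t) (Fin t) ℝ)
    (hSt : ∀ i j, St i j = S (Fin.castLE ht i) (Fin.castLE ht j)) :
    (∀ j : Fin t, Su ⟨t - 1, by omega⟩ (Fin.castLE ht j) =
      Matrix.vecMul
        (fun c => Matrix.vecMul (Qc ⟨t - 1, by omega⟩) Vtᵀ c / Real.sqrt d) Stᵀ j) ∧
    (∀ j : Fin L, t ≤ (j : ℕ) → Su ⟨t - 1, by omega⟩ j = 0) := by
  subst hSu
  have hunion : (Finset.univ : Finset (Fin L)) =
      Finset.univ.map ⟨Fin.castLE ht, Fin.castLE_injective ht⟩ ∪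
        (Finset.univ.filter (fun x : Fin L => t ≤ (x : ℕ))) := by
    ext x
    simp only [Finset.mem_union, Finset.mem_map, Finset.mem_filter, Finset.mem_univ,
      Function.Embedding.coeFn_mk, true_and, true_iff]
    by_cases hx : (x : ℕ) < t
    · refine Or.inl ⟨⟨(x : ℕ), hx⟩, ?_⟩
      ext; simp
    · exact Or.inr (Nat.le_of_not_lt hx)
  have hdisj : Disjoint (Finset.univ.map ⟨Fin.castLE ht, Fin.castLE_injective ht⟩)
      (Finset.univ.filter (fun x : Fin L => t ≤ (x : ℕ))) := by
    rw [Finset.disjoint_left]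
    intro a ha ha2
    simp only [Finset.mem_map, Finset.mem_univ, Function.Embedding.coeFn_mk, true_and] at ha
    simp only [Finset.mem_filter, Finset.mem_univ, true_and] at ha2
    obtain ⟨y, rfl⟩ := ha
    have := y.isLt
    simp only [Fin.coe_castLE] at ha2
    omega
  constructor
  · intro j
    simp only [Matrix.mul_apply, Matrix.vecMul, Matrix.transpose_apply, Matrix.of_apply,
      dotProduct, hVt, hSt]
    rw [hunion, Finset.sum_union hdisj, Finset.sum_map]
    rw [Finset.sum_eq_zero (s := Finset.univ.filter (fun x : Fin L => t ≤ (x : ℕ)))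
      (fun x hx => ?_), add_zero]
    · apply Finset.sum_congr rfl
      intro x _
      have hx : (Fin.castLE ht x : Fin L) ≤ ⟨t - 1, by omega⟩ := by
        rw [Fin.le_def]; simp; omega
      simp [hx]
    · simp only [Finset.mem_filter] at hx
      have : ¬ (x ≤ (⟨t - 1, by omega⟩ : Fin L)) := by
        rw [Fin.le_def]; simp; omega
      simp [this]
  · intro j hj
    simp only [Matrix.mul_apply, Matrix.transpose_apply, Matrix.of_apply]
    apply Finset.sum_eq_zero
    intro k _
    by_cases hk : k ≤ (⟨t-1, by omega⟩ : Fin L)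
    · rw [hS j k (by rw [Fin.le_def] at hk ⊢; simp at hk ⊢; omega)]; ring
    · simp [hk]
end

section
/- Block decomposition identity: partition {1,…,L} into N consecutive blocks T_0,…,T_{N−1} of size B (L = NB). Let Qᶜ, Vᵁ, Qᵁ, Kᵁ ∈ ℝ^{L×d}, let S = σ(QᵁKᵁᵀ/√d + Mᵁ) where Mᵁ_{ij}=0 for i<j and σ(−∞)=0 otherwise gives S_{ij}=0 for i≥j, and let Sᵁ = ((QᶜVᵁᵀ/√d) ⊙ M̃ᶜ) Sᵀ with M̃ᶜ the lower-triangular 0/1 mask. Then for all k ≥ 1 and 0 ≤ j ≤ N−1−k, the block (Sᵁ)_{T_{j+k},T_j} equals Qᶜ_{T_{j+k},:} · (Σ_{i=j}^{j+k−1} (Vᵁ_{T_i,:})ᵀ (S_{T_j,T_i})ᵀ)/√d + ((Qᶜ_{T_{j+k},:}(Vᵁ_{T_{j+k},:})ᵀ/√d) ⊙ M̃ᶜ_{T_{j+k},T_{j+k}}) (S_{T_j,T_{j+k}})ᵀ. -/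
open Matrix

/-- The logistic sigmoid `σ(x) = 1/(1+e^{−x})`. -/
noncomputable def sigmoid (x : ℝ) : ℝ := 1 / (1 + Real.exp (-x))

/-- Global index of the `p`-th element of block `T_i` when `{0,…,N·B−1}` is partitioned
into `N` consecutive blocks of size `B`. -/
def gidx {N B : ℕ} (i : Fin N) (p : Fin B) : Fin (N * B) :=
  ⟨(i : ℕ) * B + (p : ℕ), by
    calc (i : ℕ) * B + (p : ℕ) < (i : ℕ) * B + B := by omega
      _ = ((i : ℕ) + 1) * B := by ring
      _ ≤ N * B := Nat.mul_le_mul_right B i.isLt⟩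

/-!
Write a column index as `m = gidx i p`. The causal mask `m ≤ gidx (j+k) r` is the lexicographic
order on `(i, p)`: it is `1` on every block before `T_{j+k}`, the triangular mask `p ≤ r` on
`T_{j+k}` itself and `0` after it. On the blocks before `T_j` the summand vanishes because `S` is
strictly upper triangular, which leaves exactly the blocks `T_j, …, T_{j+k-1}` and the masked
diagonal block.
-/

section BlockIndex

variable {N B : ℕ} {M : Type*} [AddCommMonoid M]

theorem gidx_eq_finProdFinEquiv (i : Fin N) (p : Fin B) : gidx i p = finProdFinEquiv (i, p) :=
  Fin.ext <| by simp only [gidx, finProdFinEquiv_apply_val]; ring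

theorem sum_eq_sum_gidx (f : Fin (N * B) → M) :
    ∑ m, f m = ∑ i, ∑ p, f (gidx i p) := by
  simp only [gidx_eq_finProdFinEquiv, ← Fintype.sum_prod_type', Equiv.sum_comp]

theorem gidx_le_gidx_iff {i i' : Fin N} {p p' : Fin B} :
    gidx i p ≤ gidx i' p' ↔ i < i' ∨ i = i' ∧ p ≤ p' := by
  simp only [Fin.le_def, Fin.lt_def, Fin.ext_iff, gidx]
  have hp := p.isLt
  have hp' := p'.isLt
  rcases lt_trichotomy (i : ℕ) i' with h | h | h
  · have : ((i : ℕ) + 1) * B ≤ i' * B := Nat.mul_le_mul_right B h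
    simp only [h, true_or, iff_true]
    nlinarith
  · simp [h]
  · have : ((i' : ℕ) + 1) * B ≤ i * B := Nat.mul_le_mul_right B h
    simp only [h.not_gt, h.ne', false_and, or_self, iff_false, not_le]
    nlinarith

theorem sum_ite_le_gidx (f : Fin (N * B) → M) (I : Fin N) (r : Fin B) :
    ∑ m, (if m ≤ gidx I r then f m else 0) =
      ∑ i, (if i < I then ∑ p, f (gidx i p) else 0) +
        ∑ p, if p ≤ r then f (gidx I p) else 0 := by
  rw [sum_eq_sum_gidx, ← Fintype.sum_ite_eq' I (fun i => ∑ p, if p ≤ r then f (gidx i p) else 0),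
    ← Finset.sum_add_distrib]
  refine Finset.sum_congr rfl fun i _ => ?_
  simp only [gidx_le_gidx_iff]
  rcases lt_trichotomy i I with h | rfl | h
  · simp [h, h.ne]
  · simp
  · simp [h.not_gt, h.ne']

theorem sum_ite_le_gidx_of_forall_lt_eq_zero (f : Fin (N * B) → M) {J : Fin N}
    (hf : ∀ i < J, ∀ p, f (gidx i p) = 0) (I : Fin N) (r : Fin B) :
    ∑ m, (if m ≤ gidx I r then f m else 0) =
      ∑ i, (if J ≤ i ∧ i < I then ∑ p, f (gidx i p) else 0) +
        ∑ p, if p ≤ r then f (gidx I p) else 0 := by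
  rw [sum_ite_le_gidx]
  congr 1
  refine Finset.sum_congr rfl fun i _ => ?_
  by_cases hi : i < J
  · simp [hf i hi, hi.not_ge]
  · simp [not_lt.1 hi]

end BlockIndex

/-- block decomposition identity for the lookahead-score matrix
`Sᵁ = ((Qᶜ Vᵁᵀ/√d) ⊙ M̃ᶜ) Sᵀ`, with `S = σ(Qᵁ Kᵁᵀ/√d + Mᵁ)` (entries `0` on and below
the diagonal). For all `k ≥ 1` and `0 ≤ j ≤ N−1−k`, the block `(Sᵁ)_{T_{j+k},T_j}` equals
`Qᶜ_{T_{j+k},:} · (Σ_{i=j}^{j+k−1} (Vᵁ_{T_i,:})ᵀ (S_{T_j,T_i})ᵀ)/√d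
 + ((Qᶜ_{T_{j+k},:}(Vᵁ_{T_{j+k},:})ᵀ/√d) ⊙ M̃ᶜ_{T_{j+k},T_{j+k}}) (S_{T_j,T_{j+k}})ᵀ`. -/
theorem stmt8 (N B d : ℕ)
    (Qc Vu Qu Ku : Matrix (Fin (N * B)) (Fin d) ℝ)
    (S : Matrix (Fin (N * B)) (Fin (N * B)) ℝ)
    (hS : ∀ i j, S i j =
      if (i : ℕ) < (j : ℕ) then sigmoid ((Qu * Kuᵀ) i j / Real.sqrt d) else 0)
    (Su : Matrix (Fin (N * B)) (Fin (N * B)) ℝ)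
    (hSu : Su = (Matrix.of fun i j =>
        (Qc * Vuᵀ) i j / Real.sqrt d * (if (j : ℕ) ≤ (i : ℕ) then (1 : ℝ) else 0)) * Sᵀ)
    (k j : ℕ) (hk : 1 ≤ k) (hjk : j + k ≤ N - 1) :
    ∀ (r c : Fin B),
      Su (gidx ⟨j + k, by omega⟩ r) (gidx ⟨j, by omega⟩ c) =
        (∑ x : Fin d, Qc (gidx ⟨j + k, by omega⟩ r) x *
          (∑ i : Fin N, if j ≤ (i : ℕ) ∧ (i : ℕ) < j + k then
            ∑ p : Fin B, Vu (gidx i p) x * S (gidx ⟨j, by omega⟩ c) (gidx i p) else 0))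
          / Real.sqrt d
        + ∑ p : Fin B,
            ((∑ x : Fin d, Qc (gidx ⟨j + k, by omega⟩ r) x * Vu (gidx ⟨j + k, by omega⟩ p) x)
              / Real.sqrt d * (if (p : ℕ) ≤ (r : ℕ) then (1 : ℝ) else 0)) *
            S (gidx ⟨j, by omega⟩ c) (gidx ⟨j + k, by omega⟩ p) := by
  intro r c
  set I : Fin N := ⟨j + k, by omega⟩
  set J : Fin N := ⟨j, by omega⟩
  have hSu_apply : Su (gidx I r) (gidx J c) = ∑ m, if m ≤ gidx I r then
      (Qc * Vuᵀ) (gidx I r) m / Real.sqrt d * S (gidx J c) m else 0 := by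
    subst hSu
    simp only [mul_apply, of_apply, transpose_apply, Fin.le_def]
    refine Finset.sum_congr rfl fun m _ => ?_
    split_ifs <;> ring
  have hsummand_before : ∀ i < J, ∀ p,
      (Qc * Vuᵀ) (gidx I r) (gidx i p) / Real.sqrt d * S (gidx J c) (gidx i p) = 0 := by
    intro i hi p
    rw [hS, if_neg, mul_zero]
    exact not_lt.2 (gidx_le_gidx_iff.2 (Or.inl hi))
  rw [hSu_apply, sum_ite_le_gidx_of_forall_lt_eq_zero _ hsummand_before]
  congr 1
  · simp only [Fin.le_def, Fin.lt_def, mul_apply, transpose_apply, Finset.mul_sum, Finset.sum_mul,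
      Finset.sum_div, mul_ite, ite_div, mul_zero, zero_div]
    rw [Finset.sum_comm]
    refine Finset.sum_congr rfl fun i _ => ?_
    split_ifs
    · rw [Finset.sum_comm]
      exact Finset.sum_congr rfl fun p _ => Finset.sum_congr rfl fun x _ => by ring
    · simp
  · refine Finset.sum_congr rfl fun p _ => ?_
    simp only [Fin.le_def, mul_apply, transpose_apply]
    split_ifs <;> ring
end

section
/- Online softmax correctness: let a = (a¹, a², …, a^N) be a concatenation of finite real blocks and V = (V¹;…;V^N) a conforming block-row matrix. Define recursively m_0 = −∞, ℓ_0 = 0, O_0 = 0, and for k = 1,…,N: m_k = max(m_{k−1}, max(a^k)), ℓ_k = e^{m_{k−1}−m_k} ℓ_{k−1} + Σ_i e^{a^k_i − m_k}, O_k = e^{m_{k−1}−m_k} O_{k−1} + Σ_i e^{a^k_i − m_k} V^k_{i,:}. Then O_N / ℓ_N = softmax(a) V. -/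
open Matrix

/-- `exp` on extended reals with the convention `exp(−∞) = 0`. -/
noncomputable def eexp (x : EReal) : ℝ := if x = ⊥ then 0 else Real.exp x.toReal

lemma eexp_coe (x : ℝ) : eexp (x : EReal) = Real.exp x := by
  simp [eexp]

lemma eexp_coe_sub (x y : ℝ) : eexp ((x : EReal) - (y : EReal)) = Real.exp (x - y) := by
  rw [← EReal.coe_sub, eexp_coe]

lemma eexp_bot_sub (y : EReal) : eexp ((⊥ : EReal) - y) = 0 := by
  simp [eexp, EReal.bot_sub]

/-- online softmax correctness. For blocks `a¹, …, a^N` of finite reals and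
conforming value blocks `V¹, …, V^N`, the recursion `m_0 = −∞`, `ℓ_0 = 0`, `O_0 = 0`,
`m_k = max(m_{k−1}, max aᵏ)`, `ℓ_k = e^{m_{k−1}−m_k} ℓ_{k−1} + Σ_i e^{aᵏ_i − m_k}`,
`O_k = e^{m_{k−1}−m_k} O_{k−1} + Σ_i e^{aᵏ_i − m_k} Vᵏ_{i,:}` yields
`O_N / ℓ_N = softmax(a) V` for the concatenation `a`. -/
theorem stmt13 (N B d : ℕ) (hN : 1 ≤ N) (hB : 1 ≤ B)
    (a : Fin N → Fin B → ℝ) (V : Fin N → Matrix (Fin B) (Fin d) ℝ)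
    (m : ℕ → EReal) (l : ℕ → ℝ) (O : ℕ → Fin d → ℝ)
    (hm0 : m 0 = ⊥) (hl0 : l 0 = 0) (hO0 : O 0 = 0)
    (hm : ∀ k : Fin N, m ((k : ℕ) + 1) =
      max (m (k : ℕ)) (Finset.univ.sup fun i : Fin B => ((a k i : ℝ) : EReal)))
    (hl : ∀ k : Fin N, l ((k : ℕ) + 1) =
      eexp (m (k : ℕ) - m ((k : ℕ) + 1)) * l (k : ℕ) +
        ∑ i : Fin B, eexp (((a k i : ℝ) : EReal) - m ((k : ℕ) + 1)))
    (hO : ∀ k : Fin N, O ((k : ℕ) + 1) = fun c =>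
      eexp (m (k : ℕ) - m ((k : ℕ) + 1)) * O (k : ℕ) c +
        ∑ i : Fin B, eexp (((a k i : ℝ) : EReal) - m ((k : ℕ) + 1)) * V k i c) :
    ∀ c : Fin d, O N c / l N =
      ∑ k : Fin N, ∑ i : Fin B,
        (Real.exp (a k i) / ∑ k' : Fin N, ∑ i' : Fin B, Real.exp (a k' i')) * V k i c := by
  intro c
  set a' : ℕ → Fin B → ℝ := fun j i => if h : j < N then a ⟨j, h⟩ i else 0 with ha'
  set V' : ℕ → Fin B → ℝ := fun j i => if h : j < N then V ⟨j, h⟩ i c else 0 with hV'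
  set S : ℕ → ℝ := fun k => ∑ j ∈ Finset.range k, ∑ i, Real.exp (a' j i) with hS
  set T : ℕ → ℝ := fun k => ∑ j ∈ Finset.range k, ∑ i, Real.exp (a' j i) * V' j i with hT
  have key : ∀ k, k ≤ N → k ≠ 0 → ∃ M : ℝ, m k = (M : EReal) ∧
      l k = Real.exp (-M) * S k ∧ O k c = Real.exp (-M) * T k := by
    intro k
    induction k with
    | zero => intro _ h; exact absurd rfl h
    | succ k ih =>
      intro hk1 _
      have hkN : k < N := hk1
      set K : Fin N := ⟨k, hkN⟩ with hK
      have hmk : m (k + 1) = max (m k) (Finset.univ.sup fun i : Fin B => ((a K i : ℝ) : EReal)) := hm K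
      have hbot : (⊥ : EReal) < m (k + 1) := by
        rw [hmk]
        have hle : ((a K ⟨0, hB⟩ : ℝ) : EReal) ≤
            Finset.univ.sup fun i : Fin B => ((a K i : ℝ) : EReal) :=
          Finset.le_sup (f := fun i : Fin B => ((a K i : ℝ) : EReal))
            (Finset.mem_univ (⟨0, hB⟩ : Fin B))
        exact lt_of_lt_of_le (EReal.bot_lt_coe _) (le_max_of_le_right hle)
      have htop : m (k + 1) < ⊤ := by
        rw [hmk]
        have h1 : m k < ⊤ := by
          rcases Nat.eq_zero_or_pos k with h | h
          · rw [h, hm0]; exact bot_lt_top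
          · obtain ⟨M, hM, _, _⟩ := ih (le_of_lt hkN) (by omega)
            rw [hM]; exact EReal.coe_lt_top _
        have h2 : (Finset.univ.sup fun i : Fin B => ((a K i : ℝ) : EReal)) < ⊤ :=
          (Finset.sup_lt_iff (by exact bot_lt_top)).mpr fun i _ => EReal.coe_lt_top _
        exact max_lt h1 h2
      set M' := (m (k + 1)).toReal with hM'def
      have hM' : m (k + 1) = (M' : EReal) := (EReal.coe_toReal htop.ne hbot.ne').symm
      refine ⟨M', hM', ?_, ?_⟩
      · have hlk : l (k + 1) = eexp (m k - m (k + 1)) * l k +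
            ∑ i : Fin B, eexp (((a K i : ℝ) : EReal) - m (k + 1)) := hl K
        have hsum : ∑ i : Fin B, eexp (((a K i : ℝ) : EReal) - m (k + 1)) =
            Real.exp (-M') * ∑ i, Real.exp (a K i) := by
          rw [Finset.mul_sum]
          refine Finset.sum_congr rfl fun i _ => ?_
          rw [hM', eexp_coe_sub, sub_eq_add_neg, Real.exp_add, mul_comm]
        have hSsucc : S (k + 1) = S k + ∑ i, Real.exp (a K i) := by
          simp only [hS, Finset.sum_range_succ]
          congr 1
          refine Finset.sum_congr rfl fun i _ => ?_
          simp [ha', hkN, hK]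
        rcases Nat.eq_zero_or_pos k with h | h
        · subst h
          rw [hlk, hm0, eexp_bot_sub, hsum, hSsucc, hl0]
          have h0 : S 0 = 0 := by simp [hS]
          rw [h0]; ring
        · obtain ⟨M, hM, hlIH, _⟩ := ih (le_of_lt hkN) (by omega)
          rw [hlk, hsum, hM, hM', eexp_coe_sub, hlIH, hSsucc]
          have he : Real.exp (M - M') * Real.exp (-M) = Real.exp (-M') := by
            rw [← Real.exp_add]; congr 1; ring
          rw [← mul_assoc, he]; ring
      · have hOk : O (k + 1) c = eexp (m k - m (k + 1)) * O k c +
            ∑ i : Fin B, eexp (((a K i : ℝ) : EReal) - m (k + 1)) * V K i c := by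
          rw [hO K]
        have hsum : ∑ i : Fin B, eexp (((a K i : ℝ) : EReal) - m (k + 1)) * V K i c =
            Real.exp (-M') * ∑ i, Real.exp (a K i) * V K i c := by
          rw [Finset.mul_sum]
          refine Finset.sum_congr rfl fun i _ => ?_
          rw [hM', eexp_coe_sub, sub_eq_add_neg, Real.exp_add]
          ring
        have hTsucc : T (k + 1) = T k + ∑ i, Real.exp (a K i) * V K i c := by
          simp only [hT, Finset.sum_range_succ]
          congr 1
          refine Finset.sum_congr rfl fun i _ => ?_
          simp [ha', hV', hkN, hK]
        rcases Nat.eq_zero_or_pos k with h | h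
        · subst h
          rw [hOk, hm0, eexp_bot_sub, hsum, hTsucc, hO0]
          have h0 : T 0 = 0 := by simp [hT]
          rw [h0]; simp
        · obtain ⟨M, hM, _, hOIH⟩ := ih (le_of_lt hkN) (by omega)
          rw [hOk, hsum, hM, hM', eexp_coe_sub, hOIH, hTsucc]
          have he : Real.exp (M - M') * Real.exp (-M) = Real.exp (-M') := by
            rw [← Real.exp_add]; congr 1; ring
          rw [← mul_assoc, he]; ring
  obtain ⟨M, _, hlN, hON⟩ := key N le_rfl (by omega)
  have hSN : S N = ∑ k : Fin N, ∑ i, Real.exp (a k i) := by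
    rw [show S N = ∑ j ∈ Finset.range N, ∑ i, Real.exp (a' j i) from rfl,
      ← Fin.sum_univ_eq_sum_range]
    refine Finset.sum_congr rfl fun j _ => ?_
    refine Finset.sum_congr rfl fun i _ => ?_
    simp [ha', j.isLt]
  have hTN : T N = ∑ k : Fin N, ∑ i, Real.exp (a k i) * V k i c := by
    rw [show T N = ∑ j ∈ Finset.range N, ∑ i, Real.exp (a' j i) * V' j i from rfl,
      ← Fin.sum_univ_eq_sum_range]
    refine Finset.sum_congr rfl fun j _ => ?_
    refine Finset.sum_congr rfl fun i _ => ?_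
    simp [ha', hV', j.isLt]
  have hSpos : 0 < S N := by
    rw [hSN]
    refine Finset.sum_pos (fun k _ => Finset.sum_pos (fun i _ => Real.exp_pos _) ?_) ?_
    · exact ⟨⟨0, hB⟩, Finset.mem_univ _⟩
    · exact ⟨⟨0, hN⟩, Finset.mem_univ _⟩
  rw [hlN, hON, mul_div_mul_left _ _ (Real.exp_ne_zero _)]
  rw [hTN, ← hSN]
  simp_rw [div_mul_eq_mul_div, ← Finset.sum_div]
end
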